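/- Suppose f : ℝ^d → ℝ is L_f-smooth, h : ℝ^d → ℝ is L_h-smooth, and g : ℝ^d → ℝ ∪ {+∞} is proper, lower semicontinuous and ρ-weakly convex. Let γ ∈ (0, 1/ρ). Then the Davis–Yin map is Lipschitz: for all u₁, u₂ ∈ ℝ^d, if y_i (i = 1, 2) is the unique minimizer over y ∈ ℝ^d of g(y) + (1/(2γ))‖y − (u_i − γ∇(f+h)(u_i))‖², then ‖y₁ − y₂‖ ≤ ((1 + γ(L_f + L_h))/(1 − γρ)) ‖u₁ − u₂‖. -/

import Mathlib

/-!
The Davis–Yin map is the composition of the forward step `u ↦ u - γ ∇(f + h) u`, which is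
`(1 + γ (L_f + L_h))`-Lipschitz by the triangle inequality, with the proximal map of `γ g`.
Since `γ ρ < 1`, the prox objective `g + ‖· - w‖² / (2γ)` is `(1/γ - ρ)`-strongly convex, so it
grows quadratically away from its minimizer. Adding the growth inequalities of two prox points
`y₁, y₂` of `w₁, w₂`, each evaluated at the other point, gives
`(1 - γ ρ) ‖y₁ - y₂‖² ≤ ⟪y₁ - y₂, w₁ - w₂⟫`, and Cauchy–Schwarz makes the prox map
`1 / (1 - γ ρ)`-Lipschitz.
-/

open scoped RealInnerProductSpace

/-- `g` is `ρ`-weakly convex: `g + (ρ/2)‖·‖²` is convex (extended-real-valued version). -/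
def WeaklyConvexE {E : Type*} [NormedAddCommGroup E] [InnerProductSpace ℝ E]
    (ρ : ℝ) (g : E → EReal) : Prop :=
  ∀ x y : E, ∀ t : ℝ, 0 ≤ t → t ≤ 1 →
    g (t • x + (1 - t) • y) + (((ρ / 2) * ‖t • x + (1 - t) • y‖ ^ 2 : ℝ) : EReal) ≤
      (t : EReal) * (g x + (((ρ / 2) * ‖x‖ ^ 2 : ℝ) : EReal)) +
        ((1 - t : ℝ) : EReal) * (g y + (((ρ / 2) * ‖y‖ ^ 2 : ℝ) : EReal))

open Filter Topology

lemma EReal.le_coe_sub_of_add_coe_le {a : EReal} {r s : ℝ} (h : a + r ≤ s) :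
    a ≤ ((s - r : ℝ) : EReal) := by
  rw [EReal.coe_sub]
  exact (EReal.le_sub_iff_add_le (Or.inl (EReal.coe_ne_bot r)) (Or.inl (EReal.coe_ne_top r))).2 h

lemma le_of_forall_le_add_mul {a b k : ℝ} (h : ∀ t : ℝ, 0 < t → t ≤ 1 → a ≤ b + t * k) :
    a ≤ b := by
  have hlim : Tendsto (fun t : ℝ => b + t * k) (𝓝[>] 0) (𝓝 b) :=
    ((by fun_prop : Continuous fun t : ℝ => b + t * k).tendsto' 0 b (by simp)).mono_left
      nhdsWithin_le_nhds
  refine ge_of_tendsto hlim ?_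
  filter_upwards [Ioc_mem_nhdsGT (zero_lt_one' ℝ)] with t ht using h t ht.1 ht.2

lemma norm_sub_smul_sub_le {V : Type*} [NormedAddCommGroup V] [NormedSpace ℝ V] {F : V → V}
    {L γ : ℝ} (hF : ∀ x y, ‖F x - F y‖ ≤ L * ‖x - y‖) (hγ : 0 ≤ γ) (u₁ u₂ : V) :
    ‖(u₁ - γ • F u₁) - (u₂ - γ • F u₂)‖ ≤ (1 + γ * L) * ‖u₁ - u₂‖ :=
  calc ‖(u₁ - γ • F u₁) - (u₂ - γ • F u₂)‖ = ‖(u₁ - u₂) - γ • (F u₁ - F u₂)‖ := by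
        rw [smul_sub, sub_sub_sub_comm]
    _ ≤ ‖u₁ - u₂‖ + γ * ‖F u₁ - F u₂‖ :=
        (norm_sub_le _ _).trans_eq (by rw [norm_smul, Real.norm_of_nonneg hγ])
    _ ≤ ‖u₁ - u₂‖ + γ * (L * ‖u₁ - u₂‖) := by gcongr; exact hF u₁ u₂
    _ = (1 + γ * L) * ‖u₁ - u₂‖ := by ring

def IsProxPoint {E : Type*} [NormedAddCommGroup E] (g : E → EReal) (γ : ℝ) (w y : E) : Prop :=
  ∀ z : E, g y + ((1 / (2 * γ) * ‖y - w‖ ^ 2 : ℝ) : EReal) ≤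
    g z + ((1 / (2 * γ) * ‖z - w‖ ^ 2 : ℝ) : EReal)

lemma IsProxPoint.ne_top {E : Type*} [NormedAddCommGroup E] {g : E → EReal} {γ : ℝ} {w y : E}
    (hy : IsProxPoint g γ w y) (hg : ∃ x, g x ≠ ⊤) : g y ≠ ⊤ := by
  obtain ⟨x, hx⟩ := hg
  intro hy_top
  have h := hy x
  rw [hy_top, EReal.top_add_coe, top_le_iff] at h
  exact (EReal.add_lt_top hx (EReal.coe_ne_top _)).ne h

section InnerProductSpace

variable {E : Type*} [NormedAddCommGroup E] [InnerProductSpace ℝ E]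

lemma norm_smul_add_one_sub_smul_sq (x y : E) (t : ℝ) :
    ‖t • x + (1 - t) • y‖ ^ 2 =
      t * ‖x‖ ^ 2 + (1 - t) * ‖y‖ ^ 2 - t * (1 - t) * ‖x - y‖ ^ 2 := by
  simp only [← real_inner_self_eq_norm_sq, inner_add_add_self, inner_sub_sub_self,
    real_inner_smul_left, real_inner_smul_right]
  ring

lemma norm_sub_sq_diff_add_eq_two_inner (y₁ y₂ w₁ w₂ : E) :
    ‖y₂ - w₁‖ ^ 2 - ‖y₁ - w₁‖ ^ 2 + (‖y₁ - w₂‖ ^ 2 - ‖y₂ - w₂‖ ^ 2) =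
      2 * ⟪y₁ - y₂, w₁ - w₂⟫ := by
  simp only [← real_inner_self_eq_norm_sq, inner_sub_left, inner_sub_right,
    real_inner_comm y₁, real_inner_comm y₂]
  ring

lemma WeaklyConvexE.le_coe {ρ : ℝ} {g : E → EReal} (hg : WeaklyConvexE ρ g) {x y : E}
    {a b t : ℝ} (hx : g x = a) (hy : g y = b) (ht₀ : 0 ≤ t) (ht₁ : t ≤ 1) :
    g (t • x + (1 - t) • y) ≤
      ((t * a + (1 - t) * b + ρ / 2 * (t * (1 - t)) * ‖x - y‖ ^ 2 : ℝ) : EReal) := by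
  have h := hg x y t ht₀ ht₁
  rw [hx, hy, ← EReal.coe_add, ← EReal.coe_add, ← EReal.coe_mul, ← EReal.coe_mul,
    ← EReal.coe_add] at h
  convert EReal.le_coe_sub_of_add_coe_le h using 2
  rw [norm_smul_add_one_sub_smul_sq]
  ring

namespace IsProxPoint

variable {g : E → EReal} {γ ρ : ℝ} {w y : E}

/-- The prox objective is `(1/γ - ρ)`-strongly convex: compare `y` with `t • z + (1 - t) • y`
and let `t → 0`. -/
lemma quadratic_growth (hg : WeaklyConvexE ρ g) (hy : IsProxPoint g γ w y) {z : E} {r s : ℝ}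
    (hyr : g y = r) (hzs : g z = s) :
    r + 1 / (2 * γ) * ‖y - w‖ ^ 2 + (1 / (2 * γ) - ρ / 2) * ‖y - z‖ ^ 2 ≤
      s + 1 / (2 * γ) * ‖z - w‖ ^ 2 := by
  set c := 1 / (2 * γ)
  refine le_of_forall_le_add_mul (k := (c - ρ / 2) * ‖y - z‖ ^ 2) fun t ht₀ ht₁ => ?_
  have hmin := (hy (t • z + (1 - t) • y)).trans
    (add_le_add_left (hg.le_coe hzs hyr ht₀.le ht₁) _)
  have hseg : t • z + (1 - t) • y - w = t • (z - w) + (1 - t) • (y - w) := by module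
  rw [hyr, ← EReal.coe_add, ← EReal.coe_add, EReal.coe_le_coe_iff, hseg,
    norm_smul_add_one_sub_smul_sq, sub_sub_sub_cancel_right, norm_sub_rev z y] at hmin
  exact le_of_mul_le_mul_left (by linarith) ht₀

lemma one_sub_mul_norm_sub_le (hg : WeaklyConvexE ρ g) (hbot : ∀ x, g x ≠ ⊥)
    (htop : ∃ x, g x ≠ ⊤) (hγ : 0 < γ) {w₁ w₂ y₁ y₂ : E}
    (h₁ : IsProxPoint g γ w₁ y₁) (h₂ : IsProxPoint g γ w₂ y₂) :
    (1 - γ * ρ) * ‖y₁ - y₂‖ ≤ ‖w₁ - w₂‖ := by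
  have hr₁ : g y₁ = (g y₁).toReal := (EReal.coe_toReal (h₁.ne_top htop) (hbot _)).symm
  have hr₂ : g y₂ = (g y₂).toReal := (EReal.coe_toReal (h₂.ne_top htop) (hbot _)).symm
  have key₁ := h₁.quadratic_growth hg hr₁ hr₂
  have key₂ := h₂.quadratic_growth hg hr₂ hr₁
  rw [norm_sub_rev y₂ y₁] at key₂
  have hγc : γ * (1 / (2 * γ)) = 1 / 2 := by field_simp
  have hid := norm_sub_sq_diff_add_eq_two_inner y₁ y₂ w₁ w₂
  have hinner : (1 - γ * ρ) * ‖y₁ - y₂‖ ^ 2 ≤ ⟪y₁ - y₂, w₁ - w₂⟫ := by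
    linear_combination γ * (key₁ + key₂ + (1 / (2 * γ)) * hid) +
      2 * (⟪y₁ - y₂, w₁ - w₂⟫ - ‖y₁ - y₂‖ ^ 2) * hγc
  rcases (norm_nonneg (y₁ - y₂)).eq_or_lt with hzero | hpos
  · rw [← hzero, mul_zero]
    exact norm_nonneg _
  · refine le_of_mul_le_mul_right ?_ hpos
    calc (1 - γ * ρ) * ‖y₁ - y₂‖ * ‖y₁ - y₂‖ = (1 - γ * ρ) * ‖y₁ - y₂‖ ^ 2 := by ring
      _ ≤ ‖y₁ - y₂‖ * ‖w₁ - w₂‖ := hinner.trans (real_inner_le_norm _ _)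
      _ = ‖w₁ - w₂‖ * ‖y₁ - y₂‖ := mul_comm _ _

end IsProxPoint

end InnerProductSpace

lemma gradient_add {E : Type*} [NormedAddCommGroup E] [InnerProductSpace ℝ E] [CompleteSpace E]
    {f h : E → ℝ} {x : E} (hf : DifferentiableAt ℝ f x) (hh : DifferentiableAt ℝ h x) :
    gradient (fun w => f w + h w) x = gradient f x + gradient h x := by
  refine (hasGradientAt_iff_hasFDerivAt.mpr ?_).gradient
  rw [map_add]
  exact hf.hasGradientAt.hasFDerivAt.add hh.hasGradientAt.hasFDerivAt

theorem dy_map_lipschitz_general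
    {E : Type*} [NormedAddCommGroup E] [InnerProductSpace ℝ E] [FiniteDimensional ℝ E]
    (f h : E → ℝ) (g : E → EReal) (Lf Lh ρ : ℝ)
    (hfd : Differentiable ℝ f)
    (hflip : ∀ x y : E, ‖gradient f x - gradient f y‖ ≤ Lf * ‖x - y‖)
    (hhd : Differentiable ℝ h)
    (hhlip : ∀ x y : E, ‖gradient h x - gradient h y‖ ≤ Lh * ‖x - y‖)
    (hgtop : ∃ x, g x ≠ ⊤) (hgbot : ∀ x, g x ≠ ⊥)
    (hwc : WeaklyConvexE ρ g)
    (γ : ℝ) (hγ0 : 0 < γ) (hγρ : γ * ρ < 1)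
    (u₁ u₂ y₁ y₂ : E)
    (hy₁ : ∀ z : E,
      g y₁ + ((1 / (2 * γ) *
        ‖y₁ - (u₁ - γ • gradient (fun w => f w + h w) u₁)‖ ^ 2 : ℝ) : EReal) ≤
      g z + ((1 / (2 * γ) *
        ‖z - (u₁ - γ • gradient (fun w => f w + h w) u₁)‖ ^ 2 : ℝ) : EReal))
    (hy₂ : ∀ z : E,
      g y₂ + ((1 / (2 * γ) *
        ‖y₂ - (u₂ - γ • gradient (fun w => f w + h w) u₂)‖ ^ 2 : ℝ) : EReal) ≤
      g z + ((1 / (2 * γ) *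
        ‖z - (u₂ - γ • gradient (fun w => f w + h w) u₂)‖ ^ 2 : ℝ) : EReal)) :
    ‖y₁ - y₂‖ ≤ ((1 + γ * (Lf + Lh)) / (1 - γ * ρ)) * ‖u₁ - u₂‖ := by
  have hgrad_lip : ∀ x y : E, ‖gradient (fun w => f w + h w) x - gradient (fun w => f w + h w) y‖
      ≤ (Lf + Lh) * ‖x - y‖ := by
    intro x y
    rw [gradient_add (hfd x) (hhd x), gradient_add (hfd y) (hhd y), add_sub_add_comm, add_mul]
    exact (norm_add_le _ _).trans (add_le_add (hflip x y) (hhlip x y))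
  have hforward := norm_sub_smul_sub_le hgrad_lip hγ0.le u₁ u₂
  have hprox := IsProxPoint.one_sub_mul_norm_sub_le hwc hgbot hgtop hγ0 hy₁ hy₂
  rw [div_mul_eq_mul_div, le_div_iff₀ (by linarith), mul_comm]
  exact hprox.trans hforward

theorem dy_map_lipschitz
    {E : Type*} [NormedAddCommGroup E] [InnerProductSpace ℝ E] [FiniteDimensional ℝ E]
    (f h : E → ℝ) (g : E → EReal) (Lf Lh ρ : ℝ)
    (hLf : 0 ≤ Lf) (hLh : 0 ≤ Lh) (hρ : 0 ≤ ρ)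
    (hfd : Differentiable ℝ f)
    (hflip : ∀ x y : E, ‖gradient f x - gradient f y‖ ≤ Lf * ‖x - y‖)
    (hhd : Differentiable ℝ h)
    (hhlip : ∀ x y : E, ‖gradient h x - gradient h y‖ ≤ Lh * ‖x - y‖)
    (hgtop : ∃ x, g x ≠ ⊤) (hgbot : ∀ x, g x ≠ ⊥)
    (hglsc : LowerSemicontinuous g)
    (hwc : WeaklyConvexE ρ g)
    (γ : ℝ) (hγ0 : 0 < γ) (hγρ : γ * ρ < 1)
    (u₁ u₂ y₁ y₂ : E)
    (hy₁ : ∀ z : E,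
      g y₁ + ((1 / (2 * γ) *
        ‖y₁ - (u₁ - γ • gradient (fun w => f w + h w) u₁)‖ ^ 2 : ℝ) : EReal) ≤
      g z + ((1 / (2 * γ) *
        ‖z - (u₁ - γ • gradient (fun w => f w + h w) u₁)‖ ^ 2 : ℝ) : EReal))
    (hy₂ : ∀ z : E,
      g y₂ + ((1 / (2 * γ) *
        ‖y₂ - (u₂ - γ • gradient (fun w => f w + h w) u₂)‖ ^ 2 : ℝ) : EReal) ≤
      g z + ((1 / (2 * γ) *
        ‖z - (u₂ - γ • gradient (fun w => f w + h w) u₂)‖ ^ 2 : ℝ) : EReal)) :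
    ‖y₁ - y₂‖ ≤ ((1 + γ * (Lf + Lh)) / (1 - γ * ρ)) * ‖u₁ - u₂‖ :=
  dy_map_lipschitz_general f h g Lf Lh ρ hfd hflip hhd hhlip hgtop hgbot hwc γ hγ0 hγρ u₁ u₂ y₁ y₂
    hy₁ hy₂
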